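/- (Asymptotic stability in Theorem 1.) Let x : [0,∞) → ℝ^N be a differentiable curve and e : [0,∞) → ℝ^m a continuous curve satisfying x'(t) = A x(t) + B e(t) for all t ≥ 0, where A is an N×N real matrix and B a nonzero N×m real matrix. Suppose P and Q are symmetric positive definite N×N real matrices with Aᵀ P + P A = −Q, and let λ_min(Q), λ_max(P) denote the smallest eigenvalue of Q and the largest eigenvalue of P. Fix σ ∈ (0,1) and assume the event-triggering mechanism enforces ‖e(t)‖² ≤ σ (λ_min(Q)²/(4 ‖Bᵀ Pᵀ P B‖)) ‖x(t)‖² for all t ≥ 0. Then V(x(t)) ≤ V(x(0)) · exp( −(1−σ) λ_min(Q) t / (2 λ_max(P)) ) for all t ≥ 0, where V(z) = zᵀ P z; in particular x(t) → 0 as t → ∞. -/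

import Mathlib

/-!
Along a trajectory, `V(x) = xᵀPx` has derivative `-xᵀQx + 2 xᵀPBe`. The triggering rule bounds
`‖PBe‖²` by `σ λ_min(Q)² ‖x‖² / 4`, so Young's inequality `2ab ≤ λa²/2 + 2b²/λ` with
`λ = λ_min(Q)` absorbs the cross term into at most `(1 + σ)/2` of the dissipation `λ_min(Q)‖x‖²`.
Hence `V' ≤ -(1 - σ) λ_min(Q) ‖x‖² / 2 ≤ -(1 - σ) λ_min(Q) V / (2 λ_max(P))`, and Grönwall's
inequality gives the exponential decay of `V`, which dominates a positive multiple of `‖x‖²`.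
-/

open Matrix Filter
open scoped RealInnerProductSpace

/-- Multiplication of a vector in Euclidean space by a real matrix. -/
noncomputable def matVec {a b : ℕ} (M : Matrix (Fin a) (Fin b) ℝ)
    (v : EuclideanSpace ℝ (Fin b)) : EuclideanSpace ℝ (Fin a) :=
  Matrix.toEuclideanLin M v

/-- The operator norm of a real matrix, induced by the Euclidean norms. -/
noncomputable def opNorm {a b : ℕ} (M : Matrix (Fin a) (Fin b) ℝ) : ℝ :=
  ‖LinearMap.toContinuousLinearMap (Matrix.toEuclideanLin M)‖

section matVec

variable {a b c : ℕ}

lemma matVec_mul (M : Matrix (Fin a) (Fin b) ℝ) (M' : Matrix (Fin b) (Fin c) ℝ)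
    (v : EuclideanSpace ℝ (Fin c)) : matVec (M * M') v = matVec M (matVec M' v) := by
  simp [matVec]

lemma matVec_add (M : Matrix (Fin a) (Fin b) ℝ) (u v : EuclideanSpace ℝ (Fin b)) :
    matVec M (u + v) = matVec M u + matVec M v :=
  map_add _ u v

lemma inner_matVec_transpose (M : Matrix (Fin a) (Fin b) ℝ)
    (u : EuclideanSpace ℝ (Fin a)) (v : EuclideanSpace ℝ (Fin b)) :
    ⟪matVec Mᵀ u, v⟫ = ⟪u, matVec M v⟫ := by
  rw [← conjTranspose_eq_transpose_of_trivial]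
  simp only [matVec, Matrix.toEuclideanLin_conjTranspose_eq_adjoint]
  exact LinearMap.adjoint_inner_left _ _ _

lemma norm_matVec_le (M : Matrix (Fin a) (Fin b) ℝ) (v : EuclideanSpace ℝ (Fin b)) :
    ‖matVec M v‖ ≤ opNorm M * ‖v‖ :=
  (LinearMap.toContinuousLinearMap (Matrix.toEuclideanLin M)).le_opNorm v

lemma norm_matVec_sq (M : Matrix (Fin a) (Fin b) ℝ) (v : EuclideanSpace ℝ (Fin b)) :
    ‖matVec M v‖ ^ 2 = ⟪v, matVec (Mᵀ * M) v⟫ := by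
  rw [← real_inner_self_eq_norm_sq, matVec_mul, ← inner_matVec_transpose Mᵀ v, transpose_transpose]

lemma inner_matVec_self_le (M : Matrix (Fin a) (Fin a) ℝ) (v : EuclideanSpace ℝ (Fin a)) :
    ⟪v, matVec M v⟫ ≤ opNorm M * ‖v‖ ^ 2 :=
  calc ⟪v, matVec M v⟫ ≤ ‖v‖ * ‖matVec M v‖ := real_inner_le_norm _ _
    _ ≤ ‖v‖ * (opNorm M * ‖v‖) := by gcongr; exact norm_matVec_le M v
    _ = opNorm M * ‖v‖ ^ 2 := by ring

lemma opNorm_nonneg (M : Matrix (Fin a) (Fin b) ℝ) : 0 ≤ opNorm M :=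
  norm_nonneg _

lemma inner_matVec_comm_of_transpose_eq {P : Matrix (Fin a) (Fin a) ℝ} (hP : Pᵀ = P)
    (u v : EuclideanSpace ℝ (Fin a)) : ⟪u, matVec P v⟫ = ⟪matVec P u, v⟫ := by
  rw [← inner_matVec_transpose, hP]

lemma norm_matVec_sq_le_of_norm_sq_le {M : Matrix (Fin a) (Fin b) ℝ}
    {w : EuclideanSpace ℝ (Fin b)} {r : ℝ} (hr : 0 ≤ r)
    (hw : ‖w‖ ^ 2 ≤ r / opNorm (Mᵀ * M)) : ‖matVec M w‖ ^ 2 ≤ r := by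
  have hKr : opNorm (Mᵀ * M) * (r / opNorm (Mᵀ * M)) ≤ r := by
    rcases (opNorm_nonneg (Mᵀ * M)).eq_or_lt with hK | hK
    · rw [← hK, zero_mul]; exact hr
    · rw [mul_div_cancel₀ _ hK.ne']
  calc ‖matVec M w‖ ^ 2 = ⟪w, matVec (Mᵀ * M) w⟫ := norm_matVec_sq M w
    _ ≤ opNorm (Mᵀ * M) * ‖w‖ ^ 2 := inner_matVec_self_le _ w
    _ ≤ opNorm (Mᵀ * M) * (r / opNorm (Mᵀ * M)) := by gcongr; exact opNorm_nonneg _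
    _ ≤ r := hKr

end matVec

namespace Matrix.IsHermitian

variable {n : ℕ} {M : Matrix (Fin n) (Fin n) ℝ}

lemma matVec_eigenvectorBasis (hM : M.IsHermitian) (i : Fin n) :
    matVec M (hM.eigenvectorBasis i) = hM.eigenvalues i • hM.eigenvectorBasis i := by
  ext j
  simpa [matVec] using congrFun (hM.mulVec_eigenvectorBasis i) j

lemma inner_matVec_eq_sum (hM : M.IsHermitian) (v : EuclideanSpace ℝ (Fin n)) :
    ⟪v, matVec M v⟫ = ∑ i, hM.eigenvalues i * ⟪hM.eigenvectorBasis i, v⟫ ^ 2 := by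
  rw [← hM.eigenvectorBasis.sum_inner_mul_inner v (matVec M v)]
  refine Finset.sum_congr rfl fun i _ => ?_
  rw [← inner_matVec_transpose, ← conjTranspose_eq_transpose_of_trivial, hM,
    matVec_eigenvectorBasis, real_inner_smul_left, real_inner_comm v]
  ring

lemma norm_sq_eq_sum (hM : M.IsHermitian) (v : EuclideanSpace ℝ (Fin n)) :
    ‖v‖ ^ 2 = ∑ i, ⟪hM.eigenvectorBasis i, v⟫ ^ 2 := by
  rw [← real_inner_self_eq_norm_sq, ← hM.eigenvectorBasis.sum_inner_mul_inner v v]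
  simp only [real_inner_comm v, sq]

lemma mul_norm_sq_le_inner_matVec (hM : M.IsHermitian) {c : ℝ}
    (hc : ∀ i, c ≤ hM.eigenvalues i) (v : EuclideanSpace ℝ (Fin n)) :
    c * ‖v‖ ^ 2 ≤ ⟪v, matVec M v⟫ := by
  rw [hM.inner_matVec_eq_sum, hM.norm_sq_eq_sum, Finset.mul_sum]
  gcongr with i; exact hc i

lemma inner_matVec_le_mul_norm_sq (hM : M.IsHermitian) {c : ℝ}
    (hc : ∀ i, hM.eigenvalues i ≤ c) (v : EuclideanSpace ℝ (Fin n)) :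
    ⟪v, matVec M v⟫ ≤ c * ‖v‖ ^ 2 := by
  rw [hM.inner_matVec_eq_sum, hM.norm_sq_eq_sum, Finset.mul_sum]
  gcongr with i; exact hc i

end Matrix.IsHermitian

lemma two_mul_inner_le_of_norm_sq_le {E : Type*} [NormedAddCommGroup E] [InnerProductSpace ℝ E]
    {u y : E} {l σ : ℝ} (hl : 0 < l) (hy : ‖y‖ ^ 2 ≤ σ * l ^ 2 / 4 * ‖u‖ ^ 2) :
    2 * ⟪u, y⟫ ≤ (1 + σ) * l / 2 * ‖u‖ ^ 2 := by
  have hinner := real_inner_le_norm u y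
  suffices h : l * (2 * (‖u‖ * ‖y‖)) ≤ l * ((1 + σ) * l / 2 * ‖u‖ ^ 2) by
    linarith [le_of_mul_le_mul_left h hl]
  nlinarith [sq_nonneg (l * ‖u‖ - 2 * ‖y‖)]

lemma le_mul_exp_of_hasDerivAt_le_mul {f f' : ℝ → ℝ} {K a : ℝ}
    (hf : ∀ t, a ≤ t → HasDerivAt f (f' t) t) (hbound : ∀ t, a ≤ t → f' t ≤ K * f t)
    {t : ℝ} (ht : a ≤ t) : f t ≤ f a * Real.exp (K * (t - a)) := by
  have h := le_gronwallBound_of_liminf_deriv_right_le (f := f) (f' := f') (δ := f a) (K := K)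
    (ε := 0) (b := t)
    (fun s hs => (hf s hs.1).continuousAt.continuousWithinAt)
    (fun s hs r hr => (hf s hs.1).hasDerivWithinAt.liminf_right_slope_le hr)
    le_rfl (fun s hs => by rw [add_zero]; exact hbound s hs.1) t ⟨ht, le_rfl⟩
  rwa [gronwallBound_ε0] at h

lemma tendsto_zero_of_mul_norm_sq_le_mul_exp {E : Type*} [NormedAddCommGroup E]
    {x : ℝ → E} {μ C K : ℝ} (hμ : 0 < μ) (hK : K < 0)
    (hx : ∀ t, 0 ≤ t → μ * ‖x t‖ ^ 2 ≤ C * Real.exp (K * t)) : Tendsto x atTop (nhds 0) := by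
  have hbound : Tendsto (fun t => C / μ * Real.exp (K * t)) atTop (nhds 0) := by
    simpa using (Real.tendsto_exp_atBot.comp (tendsto_id.const_mul_atTop_of_neg hK)).const_mul
      (C / μ)
  have hsq : Tendsto (fun t => ‖x t‖ ^ 2) atTop (nhds 0) := by
    refine squeeze_zero' (Eventually.of_forall fun t => sq_nonneg _) ?_ hbound
    filter_upwards [eventually_ge_atTop 0] with t ht
    rw [div_mul_eq_mul_div, le_div_iff₀ hμ]
    linarith [hx t ht]
  rw [tendsto_zero_iff_norm_tendsto_zero]
  simpa [Real.sqrt_sq (norm_nonneg _)] using hsq.sqrt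

section Lyapunov

variable {n m : ℕ}

lemma HasDerivAt.inner_matVec_self {P : Matrix (Fin n) (Fin n) ℝ} (hP : Pᵀ = P)
    {x : ℝ → EuclideanSpace ℝ (Fin n)} {x' : EuclideanSpace ℝ (Fin n)} {t : ℝ}
    (hx : HasDerivAt x x' t) :
    HasDerivAt (fun s => ⟪x s, matVec P (x s)⟫) (2 * ⟪x t, matVec P x'⟫) t := by
  have hPx : HasDerivAt (fun s => matVec P (x s)) (matVec P x') t :=
    (LinearMap.toContinuousLinearMap (Matrix.toEuclideanLin P)).hasFDerivAt.comp_hasDerivAt t hx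
  refine (hx.inner ℝ hPx).congr_deriv ?_
  rw [inner_matVec_comm_of_transpose_eq hP x', real_inner_comm (x t)]
  ring

lemma two_mul_inner_matVec_matVec_of_lyapunov {A P Q : Matrix (Fin n) (Fin n) ℝ} (hP : Pᵀ = P)
    (hLyap : Aᵀ * P + P * A = -Q) (v : EuclideanSpace ℝ (Fin n)) :
    2 * ⟪v, matVec P (matVec A v)⟫ = -⟪v, matVec Q v⟫ := by
  have hQ : matVec Q v = -(matVec Aᵀ (matVec P v) + matVec P (matVec A v)) := by
    rw [← matVec_mul, ← matVec_mul, ← neg_eq_iff_eq_neg.2 hLyap]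
    simp [matVec]
  have hAP : ⟪v, matVec Aᵀ (matVec P v)⟫ = ⟪v, matVec P (matVec A v)⟫ := by
    rw [real_inner_comm, inner_matVec_transpose, ← inner_matVec_comm_of_transpose_eq hP]
  rw [hQ, inner_neg_right, inner_add_right, hAP, neg_neg]
  ring

lemma lyapunov_deriv_le_of_trigger {A P Q : Matrix (Fin n) (Fin n) ℝ}
    {B : Matrix (Fin n) (Fin m) ℝ} (hP : Pᵀ = P) (hQ : Q.IsHermitian)
    (hLyap : Aᵀ * P + P * A = -Q) {lamQ σ : ℝ} (hlamQ_pos : 0 < lamQ)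
    (hlamQ : ∀ i, lamQ ≤ hQ.eigenvalues i) (hσ : 0 ≤ σ)
    {u : EuclideanSpace ℝ (Fin n)} {w : EuclideanSpace ℝ (Fin m)}
    (hw : ‖w‖ ^ 2 ≤ σ * (lamQ ^ 2 / (4 * opNorm (Bᵀ * Pᵀ * P * B))) * ‖u‖ ^ 2) :
    2 * ⟪u, matVec P (matVec A u + matVec B w)⟫ ≤ -((1 - σ) * lamQ / 2 * ‖u‖ ^ 2) := by
  have hPB : Bᵀ * Pᵀ * P * B = (P * B)ᵀ * (P * B) := by
    rw [transpose_mul, Matrix.mul_assoc, Matrix.mul_assoc]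
  have hPBw : ‖matVec (P * B) w‖ ^ 2 ≤ σ * lamQ ^ 2 / 4 * ‖u‖ ^ 2 := by
    refine norm_matVec_sq_le_of_norm_sq_le (by positivity) ?_
    rw [← hPB]
    convert hw using 1
    ring
  have hcross := two_mul_inner_le_of_norm_sq_le hlamQ_pos hPBw
  have hdiss := hQ.mul_norm_sq_le_inner_matVec hlamQ u
  rw [matVec_add, inner_add_right, mul_add, two_mul_inner_matVec_matVec_of_lyapunov hP hLyap,
    ← matVec_mul]
  linarith

lemma inner_matVec_self_le_mul_exp_of_trigger {A P Q : Matrix (Fin n) (Fin n) ℝ}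
    {B : Matrix (Fin n) (Fin m) ℝ} (hP : P.IsHermitian) (hQ : Q.IsHermitian)
    (hLyap : Aᵀ * P + P * A = -Q) {lamQ lamP σ : ℝ} (hlamQ_pos : 0 < lamQ)
    (hlamQ : ∀ i, lamQ ≤ hQ.eigenvalues i) (hlamP_pos : 0 < lamP)
    (hlamP : ∀ i, hP.eigenvalues i ≤ lamP) (hσ₀ : 0 ≤ σ) (hσ₁ : σ ≤ 1)
    {x : ℝ → EuclideanSpace ℝ (Fin n)} {e : ℝ → EuclideanSpace ℝ (Fin m)}
    (hx : ∀ t, 0 ≤ t → HasDerivAt x (matVec A (x t) + matVec B (e t)) t)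
    (htrig : ∀ t, 0 ≤ t →
      ‖e t‖ ^ 2 ≤ σ * (lamQ ^ 2 / (4 * opNorm (Bᵀ * Pᵀ * P * B))) * ‖x t‖ ^ 2)
    {t : ℝ} (ht : 0 ≤ t) :
    ⟪x t, matVec P (x t)⟫ ≤
      ⟪x 0, matVec P (x 0)⟫ * Real.exp (-((1 - σ) * lamQ / (2 * lamP)) * t) := by
  have hPsymm : Pᵀ = P := (conjTranspose_eq_transpose_of_trivial P).symm.trans hP
  have hK : -((1 - σ) * lamQ / (2 * lamP)) ≤ 0 := by
    have : 0 ≤ 1 - σ := sub_nonneg.2 hσ₁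
    rw [neg_nonpos]
    positivity
  refine (le_mul_exp_of_hasDerivAt_le_mul (fun s hs => (hx s hs).inner_matVec_self hPsymm)
    (fun s hs => ?_) ht).trans_eq (by rw [sub_zero])
  calc 2 * ⟪x s, matVec P (matVec A (x s) + matVec B (e s))⟫
      ≤ -((1 - σ) * lamQ / 2 * ‖x s‖ ^ 2) :=
        lyapunov_deriv_le_of_trigger hPsymm hQ hLyap hlamQ_pos hlamQ hσ₀ (htrig s hs)
    _ = -((1 - σ) * lamQ / (2 * lamP)) * (lamP * ‖x s‖ ^ 2) := by field_simp
    _ ≤ -((1 - σ) * lamQ / (2 * lamP)) * ⟪x s, matVec P (x s)⟫ :=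
        mul_le_mul_of_nonpos_left (hP.inner_matVec_le_mul_norm_sq hlamP (x s)) hK

end Lyapunov

theorem event_triggered_asymptotic_stability_general {N m : ℕ}
    (A P Q : Matrix (Fin N) (Fin N) ℝ) (B : Matrix (Fin N) (Fin m) ℝ)
    (hP : P.PosDef) (hQ : Q.PosDef)
    (hLyap : Aᵀ * P + P * A = -Q)
    (lamQ : ℝ) (hlamQ : IsLeast (Set.range hQ.1.eigenvalues) lamQ)
    (lamP : ℝ) (hlamP : IsGreatest (Set.range hP.1.eigenvalues) lamP)
    (σ : ℝ) (hσ : σ ∈ Set.Ioo (0 : ℝ) 1)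
    (x : ℝ → EuclideanSpace ℝ (Fin N)) (e : ℝ → EuclideanSpace ℝ (Fin m))
    (hx : ∀ t, 0 ≤ t → HasDerivAt x (matVec A (x t) + matVec B (e t)) t)
    (htrig : ∀ t, 0 ≤ t →
      ‖e t‖ ^ 2 ≤ σ * (lamQ ^ 2 / (4 * opNorm (Bᵀ * Pᵀ * P * B))) * ‖x t‖ ^ 2) :
    (∀ t, 0 ≤ t → ⟪x t, matVec P (x t)⟫ ≤
        ⟪x 0, matVec P (x 0)⟫ * Real.exp (-(1 - σ) * lamQ * t / (2 * lamP))) ∧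
      Tendsto x atTop (nhds 0) := by
  obtain ⟨⟨iQ, hiQ⟩, hlamQ⟩ := hlamQ
  obtain ⟨⟨iP, hiP⟩, hlamP⟩ := hlamP
  have hlamQ_pos : 0 < lamQ := hiQ ▸ hQ.eigenvalues_pos iQ
  have hlamP_pos : 0 < lamP := hiP ▸ hP.eigenvalues_pos iP
  have hdecay := fun t (ht : 0 ≤ t) => inner_matVec_self_le_mul_exp_of_trigger hP.1 hQ.1 hLyap
    hlamQ_pos (fun i => hlamQ ⟨i, rfl⟩) hlamP_pos (fun i => hlamP ⟨i, rfl⟩) hσ.1.le hσ.2.le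
    hx htrig ht
  refine ⟨fun t ht => (hdecay t ht).trans_eq (by ring_nf), ?_⟩
  have hrate : -((1 - σ) * lamQ / (2 * lamP)) < 0 := by
    have : 0 < 1 - σ := sub_pos.2 hσ.2
    rw [neg_lt_zero]
    positivity
  have : Nonempty (Fin N) := ⟨iP⟩
  obtain ⟨iMin, hiMin⟩ := Finite.exists_min hP.1.eigenvalues
  exact tendsto_zero_of_mul_norm_sq_le_mul_exp (hP.eigenvalues_pos iMin) hrate fun t ht =>
    (hP.1.mul_norm_sq_le_inner_matVec hiMin (x t)).trans (hdecay t ht)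

/-- Asymptotic stability in Theorem 1: if the event-triggering mechanism enforces
`‖e(t)‖² ≤ σ (λ_min(Q)²/(4‖BᵀPᵀPB‖)) ‖x(t)‖²` for all `t ≥ 0` with `σ ∈ (0,1)`, then
`V(x(t)) ≤ V(x(0)) exp(-(1-σ) λ_min(Q) t / (2 λ_max(P)))` for all `t ≥ 0`, where
`V(z) = zᵀ P z`; in particular `x(t) → 0` as `t → ∞`. -/
theorem event_triggered_asymptotic_stability {N m : ℕ}
    (A P Q : Matrix (Fin N) (Fin N) ℝ) (B : Matrix (Fin N) (Fin m) ℝ)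
    (hB : B ≠ 0)
    (hP : P.PosDef) (hQ : Q.PosDef)
    (hLyap : Aᵀ * P + P * A = -Q)
    (lamQ : ℝ) (hlamQ : IsLeast (Set.range hQ.1.eigenvalues) lamQ)
    (lamP : ℝ) (hlamP : IsGreatest (Set.range hP.1.eigenvalues) lamP)
    (σ : ℝ) (hσ : σ ∈ Set.Ioo (0 : ℝ) 1)
    (x : ℝ → EuclideanSpace ℝ (Fin N)) (e : ℝ → EuclideanSpace ℝ (Fin m))
    (he : Continuous e)
    (hx : ∀ t, 0 ≤ t → HasDerivAt x (matVec A (x t) + matVec B (e t)) t)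
    (htrig : ∀ t, 0 ≤ t →
      ‖e t‖ ^ 2 ≤ σ * (lamQ ^ 2 / (4 * opNorm (Bᵀ * Pᵀ * P * B))) * ‖x t‖ ^ 2) :
    (∀ t, 0 ≤ t → ⟪x t, matVec P (x t)⟫ ≤
        ⟪x 0, matVec P (x 0)⟫ * Real.exp (-(1 - σ) * lamQ * t / (2 * lamP))) ∧
      Tendsto x atTop (nhds 0) :=
  event_triggered_asymptotic_stability_general A P Q B hP hQ hLyap lamQ hlamQ lamP hlamP σ hσ x e hx
    htrig
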